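/- (Carlitz's symmetric Bernoulli number identity.) For all positive integers m and n, (-1)^m · ∑_{k=0}^{m} C(m, k) · B_{n+k} = (-1)^n · ∑_{k=0}^{n} C(n, k) · B_{m+k}. -/

import Mathlib

/-!
Let `L : ℚ[X] → ℚ` be the umbral functional `X ^ j ↦ B_j`. The recurrence for the Bernoulli
numbers says `L ((X + 1) ^ n) = B'_n = (-1) ^ n B_n`, i.e. `L` is invariant under the reflection
`X ↦ -X - 1`. This reflection sends `X ^ n (X + 1) ^ m` to `(-1) ^ (m + n) X ^ m (X + 1) ^ n`, and
applying `L` to both sides and expanding `(X + 1) ^ m` by the binomial theorem gives the identity.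
-/

open Polynomial hiding bernoulli sum_bernoulli
open Finset

noncomputable def bernoulliFunctional : ℚ[X] →ₗ[ℚ] ℚ :=
  lsum fun j => LinearMap.toSpanSingleton ℚ ℚ (bernoulli j)

theorem bernoulliFunctional_monomial (j : ℕ) (a : ℚ) :
    bernoulliFunctional (monomial j a) = a * bernoulli j := by
  simp [bernoulliFunctional]

theorem bernoulliFunctional_X_pow_mul_X_add_one_pow (n m : ℕ) :
    bernoulliFunctional (X ^ n * (X + 1) ^ m) =
      ∑ k ∈ range (m + 1), (m.choose k : ℚ) * bernoulli (n + k) := by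
  rw [add_pow, mul_sum, map_sum]
  refine sum_congr rfl fun k _ => ?_
  rw [one_pow, mul_one, ← C_eq_natCast, ← mul_assoc, ← pow_add, mul_comm,
    C_mul_X_pow_eq_monomial, bernoulliFunctional_monomial]

theorem sum_range_succ_choose_mul_bernoulli (n : ℕ) :
    ∑ k ∈ range (n + 1), (n.choose k : ℚ) * bernoulli k = bernoulli' n := by
  rw [sum_range_succ, sum_bernoulli, Nat.choose_self, Nat.cast_one, one_mul]
  rcases eq_or_ne n 1 with rfl | hn
  · norm_num
  · rw [if_neg hn, zero_add, bernoulli_eq_bernoulli'_of_ne_one hn]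

theorem bernoulliFunctional_X_add_one_pow (n : ℕ) :
    bernoulliFunctional ((X + 1) ^ n) = bernoulli' n := by
  simpa [sum_range_succ_choose_mul_bernoulli] using
    bernoulliFunctional_X_pow_mul_X_add_one_pow 0 n

theorem bernoulliFunctional_comp_neg_X_sub_one (p : ℚ[X]) :
    bernoulliFunctional (p.comp (-X - 1)) = bernoulliFunctional p := by
  induction p using Polynomial.induction_on' with
  | add p q hp hq => rw [add_comp, map_add, map_add, hp, hq]
  | monomial j a =>
    have reflect : (monomial j a).comp (-X - 1) = C (a * (-1) ^ j) * (X + 1) ^ j := by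
      rw [monomial_comp, show (-X - 1 : ℚ[X]) = -1 * (X + 1) by ring, mul_pow, C_mul, C_pow,
        C_neg, C_1, mul_assoc]
    rw [reflect, ← smul_eq_C_mul, map_smul, bernoulliFunctional_X_add_one_pow,
      bernoulliFunctional_monomial, bernoulli'_eq_bernoulli, smul_eq_mul, ← mul_assoc,
      mul_assoc a, ← pow_add, ← two_mul, pow_mul, neg_one_sq, one_pow, mul_one]

theorem X_pow_mul_X_add_one_pow_comp_neg_X_sub_one (n m : ℕ) :
    (X ^ n * (X + 1) ^ m : ℚ[X]).comp (-X - 1) = C ((-1) ^ (m + n)) * (X ^ m * (X + 1) ^ n) := by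
  rw [mul_comp, pow_comp, pow_comp, add_comp, X_comp, one_comp,
    show (-X - 1 : ℚ[X]) = -1 * (X + 1) by ring,
    show (-1 * (X + 1) + 1 : ℚ[X]) = -1 * X by ring, mul_pow, mul_pow, C_pow, C_neg, C_1]
  ring

theorem carlitz_symmetric_bernoulli_general (m n : ℕ) :
    (-1 : ℚ) ^ m * ∑ k ∈ Finset.range (m + 1), (Nat.choose m k : ℚ) * bernoulli (n + k)
      = (-1 : ℚ) ^ n * ∑ k ∈ Finset.range (n + 1), (Nat.choose n k : ℚ) * bernoulli (m + k) := by
  have h := bernoulliFunctional_comp_neg_X_sub_one (X ^ n * (X + 1) ^ m)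
  rw [X_pow_mul_X_add_one_pow_comp_neg_X_sub_one, ← smul_eq_C_mul, map_smul, smul_eq_mul,
    bernoulliFunctional_X_pow_mul_X_add_one_pow, bernoulliFunctional_X_pow_mul_X_add_one_pow] at h
  rw [← h, ← mul_assoc, ← pow_add, ← add_assoc, ← two_mul, pow_add, pow_mul, neg_one_sq,
    one_pow, one_mul]

/-- **Carlitz's symmetric Bernoulli number identity.**
For all positive integers `m` and `n`,
`(-1)^m · ∑_{k=0}^{m} C(m,k)·B_{n+k} = (-1)^n · ∑_{k=0}^{n} C(n,k)·B_{m+k}`. -/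
theorem carlitz_symmetric_bernoulli (m n : ℕ) (hm : 0 < m) (hn : 0 < n) :
    (-1 : ℚ) ^ m * ∑ k ∈ Finset.range (m + 1), (Nat.choose m k : ℚ) * bernoulli (n + k)
      = (-1 : ℚ) ^ n * ∑ k ∈ Finset.range (n + 1), (Nat.choose n k : ℚ) * bernoulli (m + k) :=
  carlitz_symmetric_bernoulli_general m n
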